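/- arXiv:2407.07500 — 2 statements merged into one kernel-verified Lean document; each statement's English description precedes it below -/
import Mathlib

section
/- Let k ≥ 2 be an integer, let G be a finite simple graph on a vertex set V, let u ∈ V, and let W ⊆ V with u ∈ W be such that u has no neighbor of G inside W, the induced subgraph G[W \ {u}] is connected, and |W \ {u}| ≥ k. Then for every v ∈ W \ {u}, the vertices u and v are non-adjacent in G and are clear non-neighbors with respect to k. -/
/-! Grow a connected `k`-set `S` inside `W \ {u}` starting from `v`, adding one neighbour of the
current set at a time. For `v' ∈ S \ {v}`, the vertex `u` has no neighbour in
`(S \ {v'}) ∪ {u} ⊆ W`, while this set still contains `v ≠ u`; so it is disconnected. -/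

/-- `connSets k G` is the family of `k`-element subsets of the vertex set that
induce a connected subgraph of `G` (denoted `S_k(G)` in the paper). -/
def connSets {V : Type*} (k : ℕ) (G : SimpleGraph V) : Set (Finset V) :=
  {S | S.card = k ∧ (G.induce (S : Set V)).Connected}

/-- One direction of the "clear non-neighbors" condition: there is a connected
`k`-set `S` with `v ∈ S`, `u ∉ S`, such that for every `v' ∈ S \ {v}` the set
`(S \ {v'}) ∪ {u}` induces a disconnected subgraph of `G`. -/
def OneSideClear {V : Type*} [DecidableEq V] (k : ℕ) (G : SimpleGraph V) (u v : V) : Prop :=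
  ∃ S : Finset V, S.card = k ∧ (G.induce (S : Set V)).Connected ∧ v ∈ S ∧ u ∉ S ∧
    ∀ v' ∈ S.erase v,
      ¬ (G.induce ((insert u (S.erase v') : Finset V) : Set V)).Connected

/-- Two (non-adjacent) vertices `u`, `v` are clear non-neighbors with respect to `k`. -/
def ClearNonNeighbors {V : Type*} [DecidableEq V] (k : ℕ) (G : SimpleGraph V) (u v : V) : Prop :=
  OneSideClear k G u v ∨ OneSideClear k G v u

namespace SimpleGraph

variable {V : Type*} {G : SimpleGraph V}

lemma not_connected_induce_of_forall_not_adj {s : Set V} {u v : V} (hu : u ∈ s) (hv : v ∈ s)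
    (huv : u ≠ v) (hiso : ∀ w ∈ s, ¬ G.Adj u w) : ¬ (G.induce s).Connected := by
  intro hconn
  have : Nontrivial s := ⟨⟨⟨u, hu⟩, ⟨v, hv⟩, by simpa using huv⟩⟩
  obtain ⟨w, huw⟩ := hconn.preconnected.exists_adj_of_nontrivial ⟨u, hu⟩
  exact hiso w w.2 huw

lemma Connected.induce_insert_of_adj {s : Set V} {a b : V} (hs : (G.induce s).Connected)
    (ha : a ∈ s) (hab : G.Adj a b) : (G.induce (insert b s)).Connected := by
  rw [Set.insert_eq]
  exact connected_induce_union (by simp) hs.preconnected rfl ha hab.symm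

lemma Preconnected.exists_connected_finset_of_le_ncard [DecidableEq V] {T : Set V}
    (hT : (G.induce T).Preconnected) {v : V} (hv : v ∈ T) {n : ℕ} (hn : 1 ≤ n)
    (hnT : n ≤ T.ncard) :
    ∃ S : Finset V, ↑S ⊆ T ∧ v ∈ S ∧ S.card = n ∧ (G.induce (S : Set V)).Connected := by
  induction n, hn using Nat.le_induction with
  | base => exact ⟨{v}, by simpa using hv, by simp, by simp,
      by rw [Finset.coe_singleton]; simp [connected_iff]⟩
  | succ n hn ih =>
    obtain ⟨S, hST, hvS, hcard, hS⟩ := ih (by omega)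
    obtain ⟨w, hwT, hwS⟩ : ∃ w ∈ T, w ∉ S := by
      by_contra! h
      have := Set.ncard_le_ncard h S.finite_toSet
      rw [Set.ncard_coe_finset] at this
      omega
    obtain ⟨p⟩ := hT ⟨v, hv⟩ ⟨w, hwT⟩
    obtain ⟨d, -, haS, hbS⟩ := p.exists_boundary_dart {x | ↑x ∈ S} (by simpa) (by simpa)
    refine ⟨insert (d.snd : V) S, ?_, Finset.mem_insert_of_mem hvS, ?_, ?_⟩
    · rw [Finset.coe_insert]
      exact Set.insert_subset d.snd.2 hST
    · rw [Finset.card_insert_of_notMem hbS, hcard]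
    · rw [Finset.coe_insert]
      exact hS.induce_insert_of_adj haS d.adj

end SimpleGraph

theorem stmt2_general {V : Type*} [DecidableEq V] (k : ℕ) (hk : 2 ≤ k)
    (G : SimpleGraph V) (u : V) (W : Set V)
    (hnoadj : ∀ w ∈ W, ¬ G.Adj u w)
    (hconn : (G.induce (W \ {u})).Connected)
    (hcard : k ≤ (W \ {u} : Set V).ncard) :
    ∀ v ∈ W \ ({u} : Set V), ¬ G.Adj u v ∧ ClearNonNeighbors k G u v := by
  intro v hv
  refine ⟨hnoadj v hv.1, Or.inl ?_⟩
  obtain ⟨S, hSW, hvS, hSk, hS⟩ :=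
    hconn.preconnected.exists_connected_finset_of_le_ncard hv (by omega) hcard
  have huS : u ∉ S := fun h => (hSW h).2 rfl
  refine ⟨S, hSk, hS, hvS, huS, fun v' hv' => ?_⟩
  have hvT : v ∈ insert u (S.erase v') :=
    Finset.mem_insert_of_mem (Finset.mem_erase.mpr ⟨(Finset.ne_of_mem_erase hv').symm, hvS⟩)
  refine SimpleGraph.not_connected_induce_of_forall_not_adj
    (Finset.mem_insert_self u _) hvT (Ne.symm hv.2) fun w hw huw => ?_
  rcases Finset.mem_insert.mp hw with rfl | hw
  · exact huw.ne rfl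
  · exact hnoadj w (hSW (Finset.mem_of_mem_erase hw)).1 huw

theorem stmt2 {V : Type*} [Fintype V] [DecidableEq V] (k : ℕ) (hk : 2 ≤ k)
    (G : SimpleGraph V) (u : V) (W : Set V) (huW : u ∈ W)
    (hnoadj : ∀ w ∈ W, ¬ G.Adj u w)
    (hconn : (G.induce (W \ {u})).Connected)
    (hcard : k ≤ (W \ {u} : Set V).ncard) :
    ∀ v ∈ W \ ({u} : Set V), ¬ G.Adj u v ∧ ClearNonNeighbors k G u v :=
  stmt2_general k hk G u W hnoadj hconn hcard
end

section
/- Let k ≥ 2 be an integer, V a finite set, and C a family of k-element subsets of V. Let H = (E, E_N, E_U) be a partial graph on V and T ⊆ V such that T induces a connected subgraph of the graph (V, E), |T| ≥ k − 1, N_H(T) ≠ ∅, and no pair of vertices of N_H[T] belongs to E_U. Then there is at most one connected triangle-free simple graph G on V such that G is a supergraph of H, N_G(T) = N_H(T), and S_k(G) = C; that is, any two such graphs are equal. -/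
/-- A partial graph on `V`: pairwise disjoint sets of known edges `E`, known
non-edges `EN` and unknown pairs `EU` whose union is the set of all unordered
pairs of distinct vertices. -/
structure PartialGraph (V : Type*) where
  E : Set (Sym2 V)
  EN : Set (Sym2 V)
  EU : Set (Sym2 V)
  disjEEN : Disjoint E EN
  disjEEU : Disjoint E EU
  disjENEU : Disjoint EN EU
  cover : E ∪ EN ∪ EU = {e : Sym2 V | ¬ e.IsDiag}

/-- A simple graph `G` is a supergraph of a partial graph `H`. -/
def PartialGraph.Supergraph {V : Type*} (H : PartialGraph V) (G : SimpleGraph V) : Prop :=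
  H.E ⊆ G.edgeSet ∧ Disjoint G.edgeSet H.EN

/-- The open neighborhood `N_H(T)` of a set `T` in a partial graph `H`,
using only the known edges. -/
def PartialGraph.nbhd {V : Type*} (H : PartialGraph V) (T : Set V) : Set V :=
  {x | x ∉ T ∧ ∃ t ∈ T, s(t, x) ∈ H.E}

/-- The open neighborhood of a set `T` of vertices in a graph `G`. -/
def setNbhd {V : Type*} (G : SimpleGraph V) (T : Set V) : Set V :=
  {x | x ∉ T ∧ ∃ t ∈ T, G.Adj t x}

/-! Starting from `T`, whose neighbourhood and all adjacencies inside `T ∪ N(T)` are fixed by `H`,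
the agreement of `G₁` and `G₂` spreads outward one neighbourhood layer at a time; connectivity
of `G₁` makes the layers exhaust `V`. If `S` is connected with `|S| ≥ k - 1`, `u ∈ N(S)` and `v`
lies beyond `S ∪ N(S)`, pick a connected `(k-1)`-set `Q ⊆ S ∪ {u}` through `u`: as `v` has no
neighbour in `S`, the set `Q ∪ {v}` lies in `S_k` exactly when `uv` is an edge. For `x, y` in the
next layer with `x ~ u ∈ N(S)`: if `u ~ y`, triangle-freeness excludes `xy`; otherwise `y` is a
pendant vertex at `x` over a connected `(k-1)`-set `{x} ∪ Q`. For `k = 2`, `S_2(G)` is the edge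
set of `G`. -/

open SimpleGraph

namespace SimpleGraph

variable {V : Type*} {G : SimpleGraph V}

lemma induce_insert_connected {s : Set V} {u v : V} (hs : (G.induce s).Connected) (hu : u ∈ s)
    (huv : G.Adj u v) : (G.induce (insert v s)).Connected := by
  rw [← Set.union_singleton]
  exact connected_induce_union hs.preconnected (by simp [Preconnected]) hu rfl huv

lemma induce_insert_connected_iff {s : Set V} {u v : V} (hs : (G.induce s).Connected)
    (hu : u ∈ s) (hv : v ∉ s) (hvs : ∀ x ∈ s, G.Adj v x → x = u) :
    (G.induce (insert v s)).Connected ↔ G.Adj v u := by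
  refine ⟨fun h => ?_, fun h => induce_insert_connected hs hu h.symm⟩
  obtain ⟨w⟩ := h.preconnected ⟨v, s.mem_insert v⟩ ⟨u, Set.mem_insert_of_mem v hu⟩
  cases w with
  | nil => exact absurd hu (by simpa using hv)
  | @cons _ c _ hadj _ =>
    have hvc : G.Adj v c := hadj
    rcases c.2 with hc | hc
    · rw [Set.mem_singleton_iff.mp hc] at hvc
      exact absurd hvc (G.loopless.irrefl v)
    · exact hvs c hc hvc ▸ hvc

lemma exists_adj_of_induce_connected {s t : Set V} (hs : (G.induce s).Connected) (hts : t ⊆ s)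
    {a b : V} (ha : a ∈ t) (hb : b ∈ s \ t) : ∃ x ∈ t, ∃ y ∈ s \ t, G.Adj x y := by
  obtain ⟨w⟩ := hs.preconnected ⟨a, hts ha⟩ ⟨b, hb.1⟩
  obtain ⟨d, -, hd₁, hd₂⟩ := w.exists_boundary_dart {x | ↑x ∈ t} (by exact ha) (by exact hb.2)
  exact ⟨d.fst, hd₁, d.snd, ⟨d.snd.2, hd₂⟩, d.adj⟩

lemma exists_finset_subset_induce_connected {s : Set V} (hs : (G.induce s).Connected)
    {a : V} (ha : a ∈ s) {m : ℕ} (hm : 1 ≤ m) (hms : m ≤ s.ncard) :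
    ∃ t : Finset V, ↑t ⊆ s ∧ a ∈ t ∧ t.card = m ∧ (G.induce (t : Set V)).Connected := by
  classical
  induction m, hm using Nat.le_induction with
  | base =>
    refine ⟨{a}, by simpa using ha, by simp, by simp, ?_⟩
    rw [Finset.coe_singleton, induce_singleton_eq_top]
    exact connected_top
  | succ m hm ih =>
    obtain ⟨t, hts, hat, rfl, ht⟩ := ih (by omega)
    obtain ⟨b, hbs, hbt⟩ := Set.exists_mem_notMem_of_ncard_lt_ncard
      (show (t : Set V).ncard < s.ncard by rw [Set.ncard_coe_finset]; omega)
    obtain ⟨x, hxt, y, ⟨hys, hyt⟩, hxy⟩ := exists_adj_of_induce_connected hs hts hat ⟨hbs, hbt⟩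
    refine ⟨insert y t, ?_, Finset.mem_insert_of_mem hat, Finset.card_insert_of_notMem hyt, ?_⟩
    · simpa [Set.insert_subset_iff] using ⟨hys, hts⟩
    · rw [Finset.coe_insert]
      exact induce_insert_connected ht hxt hxy

lemma Connected.setNbhd_nonempty (hG : G.Connected) {s : Set V} (hs : s.Nonempty)
    (hsu : s ≠ Set.univ) : (setNbhd G s).Nonempty := by
  obtain ⟨a, ha⟩ := hs
  obtain ⟨b, hb⟩ := Set.nonempty_compl.mpr hsu
  obtain ⟨d, -, hd₁, hd₂⟩ := (hG.preconnected a b).some.exists_boundary_dart s ha hb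
  exact ⟨d.snd, hd₂, d.fst, hd₁, d.adj⟩

lemma induce_union_setNbhd_connected {s : Set V} (hs : (G.induce s).Connected) :
    (G.induce (s ∪ setNbhd G s)).Connected := by
  obtain ⟨⟨a, ha⟩⟩ := hs.nonempty
  refine induce_connected_of_patches a (Or.inl ha) fun {v} hv => ?_
  rcases hv with hv | hv
  · exact ⟨s, Set.subset_union_left, ha, hv, hs.preconnected _ _⟩
  · obtain ⟨-, x, hx, hxv⟩ := id hv
    exact ⟨insert v s, Set.insert_subset (Or.inr hv) Set.subset_union_left,
      Set.mem_insert_of_mem v ha, s.mem_insert v,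
      (induce_insert_connected hs hx hxv).preconnected _ _⟩

lemma not_adj_of_adj_of_adj (hG : G.CliqueFree 3) {u x y : V} (hux : G.Adj u x)
    (huy : G.Adj u y) : ¬ G.Adj x y := by
  classical
  exact fun hxy => hG {u, x, y} (is3Clique_triple_iff.mpr ⟨hux, huy, hxy⟩)

lemma induce_connected_of_adj_iff {G' : SimpleGraph V} {s : Set V}
    (h : ∀ x ∈ s, ∀ y ∈ s, G.Adj x y ↔ G'.Adj x y) (hs : (G.induce s).Connected) :
    (G'.induce s).Connected :=
  hs.mono fun a b hab => (h a a.2 b b.2).mp hab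

end SimpleGraph

section connSets

variable {V : Type*} {k : ℕ} {G G₁ G₂ : SimpleGraph V}

lemma mem_connSets_pair_iff [DecidableEq V] {v w : V} :
    ({v, w} : Finset V) ∈ connSets 2 G ↔ G.Adj v w := by
  by_cases hvw : v = w
  · subst hvw
    simp [connSets]
  have hw : (G.induce {w}).Connected := by
    rw [induce_singleton_eq_top]
    exact connected_top
  rw [connSets, Set.mem_ofPred_eq, Finset.card_pair hvw, Finset.coe_pair]
  simp only [true_and]
  exact induce_insert_connected_iff hw rfl hvw fun x hx _ => hx

lemma eq_of_connSets_two_eq (h : connSets 2 G₁ = connSets 2 G₂) : G₁ = G₂ := by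
  classical
  ext v w
  rw [← mem_connSets_pair_iff, ← mem_connSets_pair_iff, h]

lemma adj_iff_adj_of_connSets_eq (hC : connSets k G₁ = connSets k G₂) {Q : Finset V}
    (hQ : Q.card + 1 = k) (hQ₁ : (G₁.induce (Q : Set V)).Connected)
    (hQ₂ : (G₂.induce (Q : Set V)).Connected) {u v : V} (hu : u ∈ Q) (hv : v ∉ Q)
    (hv₁ : ∀ x ∈ Q, G₁.Adj v x → x = u) (hv₂ : ∀ x ∈ Q, G₂.Adj v x → x = u) :
    G₁.Adj v u ↔ G₂.Adj v u := by
  classical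
  have hcard : (insert v Q).card = k := by rw [Finset.card_insert_of_notMem hv, hQ]
  have hmem := Set.ext_iff.mp hC (insert v Q)
  simp only [connSets, Set.mem_ofPred_eq, hcard, true_and] at hmem
  rw [Finset.coe_insert] at hmem
  rwa [induce_insert_connected_iff hQ₁ hu hv hv₁, induce_insert_connected_iff hQ₂ hu hv hv₂] at hmem

end connSets

section Propagation

variable {V : Type*} {k : ℕ} {G G₁ G₂ : SimpleGraph V} {S : Set V}

lemma eq_of_adj_of_mem_insert {u y z : V} (hz : z ∈ insert u S) (hyS : y ∉ S)
    (hyN : y ∉ setNbhd G S) (hyz : G.Adj y z) : z = u := by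
  rcases hz with rfl | hz
  · rfl
  · exact absurd ⟨hyS, z, hz, hyz.symm⟩ hyN

def AgreeNear (G₁ G₂ : SimpleGraph V) (S : Set V) : Prop :=
  (∀ x ∈ S, ∀ y, G₁.Adj x y ↔ G₂.Adj x y) ∧
    ∀ x ∈ setNbhd G₁ S, ∀ y ∈ setNbhd G₁ S, G₁.Adj x y ↔ G₂.Adj x y

namespace AgreeNear

lemma setNbhd_eq (h : AgreeNear G₁ G₂ S) : setNbhd G₁ S = setNbhd G₂ S := by
  ext y
  exact and_congr_right fun _ => exists_congr fun x => and_congr_right fun hx => h.1 x hx y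

lemma adj_iff_of_mem_union (h : AgreeNear G₁ G₂ S) {x y : V} (hx : x ∈ S ∪ setNbhd G₁ S)
    (hy : y ∈ S ∪ setNbhd G₁ S) : G₁.Adj x y ↔ G₂.Adj x y := by
  rcases hx with hx | hx
  · exact h.1 x hx y
  rcases hy with hy | hy
  · rw [G₁.adj_comm, G₂.adj_comm]
    exact h.1 y hy x
  · exact h.2 x hx y hy

lemma exists_connected_finset (h : AgreeNear G₁ G₂ S) (hS : (G₁.induce S).Connected) {u : V}
    (hu : u ∈ setNbhd G₁ S) {m : ℕ} (hm : 1 ≤ m) (hmS : m ≤ S.ncard) :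
    ∃ Q : Finset V, ↑Q ⊆ insert u S ∧ u ∈ Q ∧ Q.card = m ∧
      (G₁.induce (Q : Set V)).Connected ∧ (G₂.induce (Q : Set V)).Connected := by
  obtain ⟨huS, t, ht, htu⟩ := id hu
  have hfin : S.Finite := Set.finite_of_ncard_pos (by omega)
  obtain ⟨Q, hQ, huQ, hQm, hQ₁⟩ := exists_finset_subset_induce_connected
    (induce_insert_connected hS ht htu) (S.mem_insert u) hm
    (by rw [Set.ncard_insert_of_notMem huS hfin]; omega)
  have hQN : ↑Q ⊆ S ∪ setNbhd G₁ S :=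
    hQ.trans (Set.insert_subset (Or.inr hu) Set.subset_union_left)
  exact ⟨Q, hQ, huQ, hQm, hQ₁, induce_connected_of_adj_iff
    (fun x hx y hy => h.adj_iff_of_mem_union (hQN hx) (hQN hy)) hQ₁⟩

lemma adj_iff_of_mem_setNbhd (h : AgreeNear G₁ G₂ S) (hk : 2 ≤ k)
    (hC : connSets k G₁ = connSets k G₂) (hS : (G₁.induce S).Connected)
    (hScard : k - 1 ≤ S.ncard) {u : V} (hu : u ∈ setNbhd G₁ S) (v : V) :
    G₁.Adj u v ↔ G₂.Adj u v := by
  by_cases hv : v ∈ S ∪ setNbhd G₁ S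
  · exact h.adj_iff_of_mem_union (Or.inr hu) hv
  obtain ⟨hvS, hvN⟩ := not_or.mp hv
  obtain ⟨Q, hQ, huQ, hQk, hQ₁, hQ₂⟩ :=
    h.exists_connected_finset hS hu (m := k - 1) (by omega) hScard
  rw [G₁.adj_comm, G₂.adj_comm]
  refine adj_iff_adj_of_connSets_eq hC (by omega) hQ₁ hQ₂ huQ (fun hvQ => hv ?_)
    (fun x hx => eq_of_adj_of_mem_insert (hQ hx) hvS hvN)
    (fun x hx => eq_of_adj_of_mem_insert (hQ hx) hvS (h.setNbhd_eq ▸ hvN))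
  rcases hQ hvQ with rfl | hvS'
  exacts [Or.inr hu, Or.inl hvS']

lemma adj_iff_of_adj_setNbhd (h : AgreeNear G₁ G₂ S) (hk : 3 ≤ k)
    (hC : connSets k G₁ = connSets k G₂) (hfree₁ : G₁.CliqueFree 3) (hfree₂ : G₂.CliqueFree 3)
    (hS : (G₁.induce S).Connected) (hScard : k - 1 ≤ S.ncard) {u x y : V}
    (hu : u ∈ setNbhd G₁ S) (hux : G₁.Adj u x)
    (hx : x ∉ S ∪ setNbhd G₁ S) (hy : y ∉ S ∪ setNbhd G₁ S) :
    G₁.Adj x y ↔ G₂.Adj x y := by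
  classical
  have huAdj := h.adj_iff_of_mem_setNbhd (by omega) hC hS hScard hu
  by_cases huy : G₁.Adj u y
  · exact iff_of_false (not_adj_of_adj_of_adj hfree₁ hux huy)
      (not_adj_of_adj_of_adj hfree₂ ((huAdj x).mp hux) ((huAdj y).mp huy))
  by_cases hxy : x = y
  · subst hxy
    exact iff_of_false (G₁.loopless.irrefl x) (G₂.loopless.irrefl x)
  obtain ⟨hxS, hxN⟩ := not_or.mp hx
  obtain ⟨hyS, hyN⟩ := not_or.mp hy
  obtain ⟨Q, hQ, huQ, hQk, hQ₁, hQ₂⟩ :=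
    h.exists_connected_finset hS hu (m := k - 2) (by omega) (by omega)
  have hxQ : x ∉ Q := fun hxQ => by
    rcases hQ hxQ with rfl | hxS'
    exacts [hxN hu, hxS hxS']
  have hyQ : y ∉ insert x Q := fun hyQ => by
    rcases Finset.mem_insert.mp hyQ with rfl | hyQ
    · exact hxy rfl
    rcases hQ hyQ with rfl | hyS'
    exacts [hyN hu, hyS hyS']
  have pendant : ∀ G : SimpleGraph V, setNbhd G S = setNbhd G₁ S → ¬ G.Adj u y →
      ∀ z ∈ insert x Q, G.Adj y z → z = x := by
    intro G hG hGuy z hz hyz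
    rcases Finset.mem_insert.mp hz with rfl | hz
    · rfl
    · obtain rfl := eq_of_adj_of_mem_insert (hQ hz) hyS (hG ▸ hyN) hyz
      exact absurd hyz.symm hGuy
  have hQx : ∀ G : SimpleGraph V, G.Adj u x → (G.induce (Q : Set V)).Connected →
      (G.induce ((insert x Q : Finset V) : Set V)).Connected := fun G hGux hGQ => by
    rw [Finset.coe_insert]
    exact induce_insert_connected hGQ huQ hGux
  rw [G₁.adj_comm, G₂.adj_comm]
  exact adj_iff_adj_of_connSets_eq hC (by rw [Finset.card_insert_of_notMem hxQ]; omega)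
    (hQx G₁ hux hQ₁) (hQx G₂ ((huAdj x).mp hux) hQ₂) (Finset.mem_insert_self x Q) hyQ
    (pendant G₁ rfl huy) (pendant G₂ h.setNbhd_eq.symm (fun h₂ => huy ((huAdj y).mpr h₂)))

lemma union_setNbhd (h : AgreeNear G₁ G₂ S) (hk : 3 ≤ k) (hC : connSets k G₁ = connSets k G₂)
    (hfree₁ : G₁.CliqueFree 3) (hfree₂ : G₂.CliqueFree 3) (hS : (G₁.induce S).Connected)
    (hScard : k - 1 ≤ S.ncard) : AgreeNear G₁ G₂ (S ∪ setNbhd G₁ S) := by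
  have outer : ∀ {x}, x ∈ setNbhd G₁ (S ∪ setNbhd G₁ S) →
      x ∉ S ∪ setNbhd G₁ S ∧ ∃ u ∈ setNbhd G₁ S, G₁.Adj u x := by
    rintro x ⟨hx, u, hu, hux⟩
    refine ⟨hx, u, hu.resolve_left fun huS => ?_, hux⟩
    exact hx (Or.inr ⟨fun hxS => hx (Or.inl hxS), u, huS, hux⟩)
  refine ⟨fun x hx y => ?_, fun x hx y hy => ?_⟩
  · rcases hx with hx | hx
    exacts [h.1 x hx y, h.adj_iff_of_mem_setNbhd (by omega) hC hS hScard hx y]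
  · obtain ⟨hx, u, hu, hux⟩ := outer hx
    exact h.adj_iff_of_adj_setNbhd hk hC hfree₁ hfree₂ hS hScard hu hux hx (outer hy).1

lemma eq_of_connSets_eq [Finite V] (h : AgreeNear G₁ G₂ S) (hk : 3 ≤ k)
    (hC : connSets k G₁ = connSets k G₂) (hconn₁ : G₁.Connected) (hfree₁ : G₁.CliqueFree 3)
    (hfree₂ : G₂.CliqueFree 3) (hS : (G₁.induce S).Connected) (hScard : k - 1 ≤ S.ncard) :
    G₁ = G₂ := by
  induction hn : Sᶜ.ncard using Nat.strong_induction_on generalizing S with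
  | _ n ih =>
  by_cases hSu : S = Set.univ
  · ext x y
    exact h.1 x (hSu ▸ trivial) y
  obtain ⟨v, hv⟩ := hconn₁.setNbhd_nonempty (Set.nonempty_of_ncard_ne_zero (by omega)) hSu
  have hlt : (S ∪ setNbhd G₁ S)ᶜ.ncard < n :=
    hn ▸ Set.ncard_lt_ncard ⟨Set.compl_subset_compl.mpr Set.subset_union_left,
      fun hsub => hsub hv.1 (Or.inr hv)⟩
  exact ih _ hlt (h.union_setNbhd hk hC hfree₁ hfree₂ hS hScard)
    (induce_union_setNbhd_connected hS) (hScard.trans (Set.ncard_le_ncard Set.subset_union_left))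
    rfl

end AgreeNear

end Propagation

namespace PartialGraph

variable {V : Type*} {H : PartialGraph V} {G G₁ G₂ : SimpleGraph V}

lemma Supergraph.fromEdgeSet_le (h : H.Supergraph G) : SimpleGraph.fromEdgeSet H.E ≤ G :=
  fun _ _ hab => h.1 ((SimpleGraph.fromEdgeSet_adj _).mp hab).1

lemma Supergraph.adj_iff_mem_E (h : H.Supergraph G) {x y : V} (hxy : s(x, y) ∉ H.EU) :
    G.Adj x y ↔ s(x, y) ∈ H.E := by
  have hcover : s(x, y) ∈ H.E ∪ H.EN ∪ H.EU ↔ x ≠ y := by simp [H.cover]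
  by_cases hne : x = y
  · exact iff_of_false (hne ▸ G.loopless.irrefl x) fun hE => hcover.mp (Or.inl (Or.inl hE)) hne
  rcases hcover.mpr hne with (hE | hEN) | hEU
  · exact iff_of_true (h.1 hE) hE
  · exact iff_of_false (fun hG => Set.disjoint_left.mp h.2 hG hEN)
      fun hE => Set.disjoint_left.mp H.disjEEN hE hEN
  · exact absurd hEU hxy

lemma agreeNear (hsup₁ : H.Supergraph G₁) (hsup₂ : H.Supergraph G₂) {T : Set V}
    (hN₁ : setNbhd G₁ T = H.nbhd T) (hN₂ : setNbhd G₂ T = H.nbhd T)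
    (hknown : ∀ x ∈ T ∪ H.nbhd T, ∀ y ∈ T ∪ H.nbhd T, s(x, y) ∉ H.EU) :
    AgreeNear G₁ G₂ T := by
  have known {x y} (hx : x ∈ T ∪ H.nbhd T) (hy : y ∈ T ∪ H.nbhd T) : G₁.Adj x y ↔ G₂.Adj x y :=
    (hsup₁.adj_iff_mem_E (hknown x hx y hy)).trans (hsup₂.adj_iff_mem_E (hknown x hx y hy)).symm
  refine ⟨fun x hx y => ?_, fun x hx y hy => ?_⟩
  · by_cases hy : y ∈ T ∪ H.nbhd T
    · exact known (Or.inl hx) hy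
    obtain ⟨hyT, hyN⟩ := not_or.mp hy
    exact iff_of_false (fun h₁ => hyN (hN₁ ▸ ⟨hyT, x, hx, h₁⟩))
      (fun h₂ => hyN (hN₂ ▸ ⟨hyT, x, hx, h₂⟩))
  · rw [hN₁] at hx hy
    exact known (Or.inr hx) (Or.inr hy)

end PartialGraph

theorem stmt12_general {V : Type*} [Fintype V] (k : ℕ) (hk : 2 ≤ k)
    (C : Set (Finset V))
    (H : PartialGraph V) (T : Set V)
    (hTconn : ((SimpleGraph.fromEdgeSet H.E).induce T).Connected)
    (hTcard : k - 1 ≤ T.ncard)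
    (hknown : ∀ x ∈ T ∪ H.nbhd T, ∀ y ∈ T ∪ H.nbhd T, s(x, y) ∉ H.EU)
    (G₁ G₂ : SimpleGraph V)
    (hconn₁ : G₁.Connected) (hfree₁ : G₁.CliqueFree 3)
    (hsup₁ : H.Supergraph G₁) (hN₁ : setNbhd G₁ T = H.nbhd T)
    (hC₁ : connSets k G₁ = C)
    (hfree₂ : G₂.CliqueFree 3)
    (hsup₂ : H.Supergraph G₂) (hN₂ : setNbhd G₂ T = H.nbhd T)
    (hC₂ : connSets k G₂ = C) :
    G₁ = G₂ := by
  have hC : connSets k G₁ = connSets k G₂ := hC₁.trans hC₂.symm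
  obtain rfl | hk : k = 2 ∨ 3 ≤ k := by omega
  · exact eq_of_connSets_two_eq hC
  exact (PartialGraph.agreeNear hsup₁ hsup₂ hN₁ hN₂ hknown).eq_of_connSets_eq hk hC hconn₁
    hfree₁ hfree₂ (hTconn.mono fun _ _ hab => hsup₁.fromEdgeSet_le hab) hTcard

theorem stmt12 {V : Type*} [Fintype V] [DecidableEq V] (k : ℕ) (hk : 2 ≤ k)
    (C : Set (Finset V)) (hC : ∀ S ∈ C, S.card = k)
    (H : PartialGraph V) (T : Set V)
    (hTconn : ((SimpleGraph.fromEdgeSet H.E).induce T).Connected)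
    (hTcard : k - 1 ≤ T.ncard)
    (hN : (H.nbhd T).Nonempty)
    (hknown : ∀ x ∈ T ∪ H.nbhd T, ∀ y ∈ T ∪ H.nbhd T, s(x, y) ∉ H.EU)
    (G₁ G₂ : SimpleGraph V)
    (hconn₁ : G₁.Connected) (hfree₁ : G₁.CliqueFree 3)
    (hsup₁ : H.Supergraph G₁) (hN₁ : setNbhd G₁ T = H.nbhd T)
    (hC₁ : connSets k G₁ = C)
    (hconn₂ : G₂.Connected) (hfree₂ : G₂.CliqueFree 3)
    (hsup₂ : H.Supergraph G₂) (hN₂ : setNbhd G₂ T = H.nbhd T)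
    (hC₂ : connSets k G₂ = C) :
    G₁ = G₂ :=
  stmt12_general k hk C H T hTconn hTcard hknown G₁ G₂ hconn₁ hfree₁ hsup₁ hN₁ hC₁ hfree₂ hsup₂ hN₂
    hC₂
end
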